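/- arXiv:2411.04120 — 3 statements merged into one kernel-verified Lean document; each statement's English description precedes it below -/
import Mathlib

section
/- Let ρ be a density matrix on (ℂ²)^⊗3 (positive semidefinite, trace 1) with real entries, and set x = tr(ρ SWAP₁₂), y = tr(ρ SWAP₁₃), z = tr(ρ SWAP₂₃). Then 0 ≤ x + y + z ≤ 3 (Lieb–Mattis inequality). -/
open Matrix
open scoped ComplexOrder

/-- The permutation operator `T(π)` on `(ℂ^d)^⊗n`, sending the basis vector
`e_f` to `e_{f ∘ π⁻¹}`. -/
noncomputable def permOp (n d : ℕ) (π : Equiv.Perm (Fin n)) :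
    Matrix (Fin n → Fin d) (Fin n → Fin d) ℂ :=
  Matrix.of fun i j => if i = j ∘ ⇑π.symm then 1 else 0

/-- The swap operator exchanging tensor factors `i` and `j` of `(ℂ²)^⊗n`. -/
noncomputable def swapOp (n : ℕ) (i j : Fin n) :
    Matrix (Fin n → Fin 2) (Fin n → Fin 2) ℂ :=
  permOp n 2 (Equiv.swap i j)

/-!
The symmetrizer `S = ∑_π T(π)` absorbs every `T(σ)` on the right, so `S² = n! • S`; being also
Hermitian, `S / n!` is an orthogonal projection. When `d < n` every basis vector `e_j` has two
equal tensor factors `a ≠ b`, and `π ↦ π * (a b)` pairs the terms of the antisymmetrizer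
`∑_π sign(π) T(π)` with opposite signs, so it vanishes; hence the odd permutations make up
exactly half of `S`. For three qubits these are the three swaps, so
`SWAP₁₂ + SWAP₁₃ + SWAP₂₃ = 3 P` with `P = S / 3!` a projection. Finally `tr(ρ P) = tr(P ρ P) ≥ 0`,
and the same for `1 - P` gives `tr(ρ P) ≤ tr ρ = 1`.
-/

open scoped Nat

theorem Matrix.PosSemidef.trace_mul_nonneg_of_isStarProjection {ι R : Type*} [Fintype ι]
    [CommRing R] [PartialOrder R] [StarRing R] [AddLeftMono R] {ρ P : Matrix ι ι R}
    (hρ : ρ.PosSemidef) (hP : IsStarProjection P) : 0 ≤ (ρ * P).trace := by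
  have hPP : P * P = P := hP.isIdempotentElem
  have hPh : Pᴴ = P := hP.isSelfAdjoint
  calc 0 ≤ (Pᴴ * ρ * P).trace := (hρ.conjTranspose_mul_mul_same P).trace_nonneg
    _ = (ρ * P).trace := by rw [hPh, Matrix.mul_assoc, trace_mul_comm, Matrix.mul_assoc, hPP]

noncomputable def symmetrizer (n d : ℕ) : Matrix (Fin n → Fin d) (Fin n → Fin d) ℂ :=
  ∑ π : Equiv.Perm (Fin n), permOp n d π

section permOp

variable {n d : ℕ}

theorem permOp_mul (σ τ : Equiv.Perm (Fin n)) :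
    permOp n d (σ * τ) = permOp n d σ * permOp n d τ := by
  ext i j
  simp [permOp, Matrix.mul_apply, ← Equiv.Perm.inv_def, Function.comp_assoc]

theorem conjTranspose_permOp (π : Equiv.Perm (Fin n)) :
    (permOp n d π)ᴴ = permOp n d π⁻¹ := by
  ext i j
  simp [permOp, Equiv.Perm.inv_def, Equiv.eq_comp_symm, eq_comm]

theorem sum_sign_smul_permOp_eq_zero (h : d < n) :
    ∑ π : Equiv.Perm (Fin n), ((Equiv.Perm.sign π : ℤ) : ℂ) • permOp n d π = 0 := by
  ext i j
  obtain ⟨a, b, hab, hj⟩ : ∃ a b, a ≠ b ∧ j a = j b := by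
    simpa using Fintype.exists_ne_map_eq_of_card_lt j (by simpa using h)
  have hjs : j ∘ Equiv.swap a b = j := by
    funext x
    rw [Function.comp_apply, Equiv.swap_apply_def]
    split_ifs <;> simp_all
  set f : Equiv.Perm (Fin n) → ℂ := fun π => ((Equiv.Perm.sign π : ℤ) : ℂ) * permOp n d π i j
  have hf : ∀ π, f (π * Equiv.swap a b) = - f π := by
    intro π
    simp [f, permOp, Equiv.Perm.sign_mul, Equiv.Perm.sign_swap hab, ← Equiv.Perm.inv_def,
      ← Function.comp_assoc, Equiv.swap_inv, hjs]
    split_ifs <;> simp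
  have : ∑ π, f π = - ∑ π, f π := calc
    ∑ π, f π = ∑ π, f (π * Equiv.swap a b) :=
        (Equiv.sum_comp (Equiv.mulRight (Equiv.swap a b)) f).symm
    _ = - ∑ π, f π := by simp [hf]
  simpa [f, Matrix.sum_apply] using self_eq_neg.mp this

theorem symmetrizer_mul_permOp (σ : Equiv.Perm (Fin n)) :
    symmetrizer n d * permOp n d σ = symmetrizer n d := by
  simp only [symmetrizer, Finset.sum_mul, ← permOp_mul]
  exact Equiv.sum_comp (Equiv.mulRight σ) (permOp n d)

theorem symmetrizer_mul_self :
    symmetrizer n d * symmetrizer n d = (n ! : ℂ) • symmetrizer n d := by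
  nth_rw 2 [symmetrizer]
  rw [Finset.mul_sum]
  simp only [symmetrizer_mul_permOp, Finset.sum_const, Finset.card_univ, Fintype.card_perm,
    Fintype.card_fin, Nat.cast_smul_eq_nsmul]

theorem conjTranspose_symmetrizer : (symmetrizer n d)ᴴ = symmetrizer n d := by
  simp only [symmetrizer, conjTranspose_sum, conjTranspose_permOp]
  exact Equiv.sum_comp (Equiv.inv _) (permOp n d)

theorem isStarProjection_inv_factorial_smul_symmetrizer :
    IsStarProjection ((n ! : ℂ)⁻¹ • symmetrizer n d) where
  isIdempotentElem := by
    rw [IsIdempotentElem, smul_mul_smul, symmetrizer_mul_self, smul_smul]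
    field_simp
  isSelfAdjoint := by
    simp [IsSelfAdjoint, star_eq_conjTranspose, conjTranspose_symmetrizer]

theorem sum_filter_sign_eq_neg_one_permOp (h : d < n) :
    ∑ π ∈ Finset.univ.filter (fun π : Equiv.Perm (Fin n) => Equiv.Perm.sign π = -1),
      permOp n d π = (2 : ℂ)⁻¹ • symmetrizer n d := by
  have hodd : ∀ π : Equiv.Perm (Fin n), (1 - ((Equiv.Perm.sign π : ℤ) : ℂ)) • permOp n d π =
      if Equiv.Perm.sign π = -1 then (2 : ℂ) • permOp n d π else 0 := by
    intro π
    rcases Int.units_eq_one_or (Equiv.Perm.sign π) with hπ | hπ <;> norm_num [hπ]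
  have htwice : (2 : ℂ) • ∑ π ∈ Finset.univ.filter (fun π : Equiv.Perm (Fin n) =>
      Equiv.Perm.sign π = -1), permOp n d π = symmetrizer n d := calc
    _ = ∑ π, (1 - ((Equiv.Perm.sign π : ℤ) : ℂ)) • permOp n d π := by
      simp only [hodd, Finset.smul_sum, Finset.sum_filter, smul_ite, smul_zero]
    _ = symmetrizer n d -
          ∑ π : Equiv.Perm (Fin n), ((Equiv.Perm.sign π : ℤ) : ℂ) • permOp n d π := by
      simp only [sub_smul, one_smul, Finset.sum_sub_distrib, symmetrizer]
    _ = symmetrizer n d := by rw [sum_sign_smul_permOp_eq_zero h, sub_zero]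
  rw [← htwice, smul_smul]
  norm_num

end permOp

theorem swapOp_add_swapOp_add_swapOp :
    swapOp 3 0 1 + swapOp 3 0 2 + swapOp 3 1 2 = (2 : ℂ)⁻¹ • symmetrizer 3 2 := by
  have hodd : (Finset.univ.filter fun π : Equiv.Perm (Fin 3) => Equiv.Perm.sign π = -1) =
      {Equiv.swap 0 1, Equiv.swap 0 2, Equiv.swap 1 2} := by decide
  rw [← sum_filter_sign_eq_neg_one_permOp (by norm_num), hodd, Finset.sum_insert (by decide),
    Finset.sum_insert (by decide), Finset.sum_singleton, add_assoc]
  rfl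

theorem lieb_mattis_general (ρ : Matrix (Fin 3 → Fin 2) (Fin 3 → Fin 2) ℂ)
    (hpsd : ρ.PosSemidef) (htr : ρ.trace = 1)
    (x y z : ℝ)
    (hx : x = (Matrix.trace (ρ * swapOp 3 0 1)).re)
    (hy : y = (Matrix.trace (ρ * swapOp 3 0 2)).re)
    (hz : z = (Matrix.trace (ρ * swapOp 3 1 2)).re) :
    0 ≤ x + y + z ∧ x + y + z ≤ 3 := by
  set P := ((3 ! : ℕ) : ℂ)⁻¹ • symmetrizer 3 2
  have hP : IsStarProjection P := isStarProjection_inv_factorial_smul_symmetrizer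
  have hsum : x + y + z = 3 * (ρ * P).trace.re := by
    have hswap : swapOp 3 0 1 + swapOp 3 0 2 + swapOp 3 1 2 = (3 : ℂ) • P := by
      rw [swapOp_add_swapOp_add_swapOp, smul_smul]
      norm_num [Nat.factorial]
    calc x + y + z = (ρ * (swapOp 3 0 1 + swapOp 3 0 2 + swapOp 3 1 2)).trace.re := by
          simp only [hx, hy, hz, Matrix.mul_add, trace_add, Complex.add_re]
      _ = 3 * (ρ * P).trace.re := by simp [hswap, trace_smul]
  have hlower := hpsd.trace_mul_nonneg_of_isStarProjection hP
  have hupper := hpsd.trace_mul_nonneg_of_isStarProjection hP.one_sub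
  rw [Matrix.mul_sub, trace_sub, Matrix.mul_one, htr] at hupper
  rw [Complex.nonneg_iff] at hlower hupper
  simp only [Complex.sub_re, Complex.one_re] at hupper
  constructor <;> linarith [hlower.1, hupper.1]

theorem lieb_mattis (ρ : Matrix (Fin 3 → Fin 2) (Fin 3 → Fin 2) ℂ)
    (hpsd : ρ.PosSemidef) (htr : ρ.trace = 1)
    (hreal : ∀ i j, (ρ i j).im = 0)
    (x y z : ℝ)
    (hx : x = (Matrix.trace (ρ * swapOp 3 0 1)).re)
    (hy : y = (Matrix.trace (ρ * swapOp 3 0 2)).re)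
    (hz : z = (Matrix.trace (ρ * swapOp 3 1 2)).re) :
    0 ≤ x + y + z ∧ x + y + z ≤ 3 :=
  lieb_mattis_general ρ hpsd htr x y z hx hy hz
end

section
/- Let x, y, z ∈ ℝ satisfy 0 ≤ x + y + z ≤ 3 and (x² + y² + z²) − 2(xy + xz + yz) + 2(x + y + z) ≤ 3. Then there exists a density matrix ρ on (ℂ²)^⊗3 with real entries and ρᵀ = ρ such that tr(ρ SWAP₁₂) = x, tr(ρ SWAP₁₃) = y, tr(ρ SWAP₂₃) = z. -/
open Matrix
open scoped ComplexOrder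

/-!
Take `ρ = (s/3)|000⟩⟨000| + M`, `s = x + y + z`, with `M` supported on the weight-one space
`span {|100⟩, |010⟩, |001⟩}`. There the swaps act as the permutation matrices `P_τ` of the
transpositions of `Fin 3`, and `M = (t/2)·1 + Σ_τ c_τ P_τ` with `t = 1 - s/3`, so that
`tr (ρ SWAP_τ) = s/3 + t/2 + 3 c_τ`; this fixes `c_τ`. Since `Σ c_τ = -t/2`, one checks
`t M = MᵀM + e (3·1 - J)` with `e = c₀₁c₀₂ + c₀₁c₁₂ + c₀₂c₁₂ = (3 - PT)/36`, where `PT` is the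
left-hand side of the Parekh–Thompson inequality. So that inequality makes `M` positive
semidefinite, and Lieb–Mattis makes both weights `s/3` and `t` nonnegative.
-/

theorem Matrix.PosSemidef.map_ofReal {n : Type*} [Fintype n] [DecidableEq n]
    {A : Matrix n n ℝ} (hA : A.PosSemidef) : (A.map ((↑) : ℝ → ℂ)).PosSemidef := by
  set U : Matrix n n ℝ := ↑hA.1.eigenvectorUnitary
  have hspec : A = U * diagonal hA.1.eigenvalues * Uᴴ := by
    have h := hA.1.spectral_theorem
    simp only [Unitary.conjStarAlgAut_apply] at h
    exact h
  have hstar : Function.Semiconj Complex.ofRealHom star star :=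
    fun r => (Complex.conj_ofReal r).symm
  rw [hspec]
  change ((U * diagonal hA.1.eigenvalues * Uᴴ).map Complex.ofRealHom).PosSemidef
  rw [Matrix.map_mul, Matrix.map_mul, conjTranspose_map _ hstar, diagonal_map (map_zero _)]
  exact (PosSemidef.diagonal fun i => by simpa using hA.eigenvalues_nonneg i).mul_mul_conjTranspose_same
    _

theorem trace_map_ofReal_mul_permOp {n d : ℕ} (A : Matrix (Fin n → Fin d) (Fin n → Fin d) ℝ)
    (π : Equiv.Perm (Fin n)) :
    trace (A.map ((↑) : ℝ → ℂ) * permOp n d π) = ((∑ f, A f (f ∘ π.symm) : ℝ) : ℂ) := by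
  simp [trace, mul_apply, permOp]

theorem permOp_one (n d : ℕ) : permOp n d 1 = 1 := by
  ext f g
  simp [permOp, one_apply, ← Equiv.Perm.inv_def]

section EmbeddingMatrix

variable {ι κ : Type*} [Fintype ι] [DecidableEq κ] (R : Type*) [NonAssocSemiring R]

def embeddingMatrix (w : ι → κ) : Matrix κ ι R := of fun f a => if f = w a then 1 else 0

variable {R} {w : ι → κ} (N : Matrix ι ι R)

theorem embeddingMatrix_mul_mul_transpose_apply_of_notMem {f : κ} (hf : f ∉ Set.range w)
    (g : κ) : (embeddingMatrix R w * N * (embeddingMatrix R w)ᵀ) f g = 0 := by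
  have hf' (a : ι) : f ≠ w a := fun h => hf ⟨a, h.symm⟩
  simp [mul_apply, embeddingMatrix, hf']

theorem embeddingMatrix_mul_mul_transpose_apply (hw : w.Injective) (a b : ι) :
    (embeddingMatrix R w * N * (embeddingMatrix R w)ᵀ) (w a) (w b) = N a b := by
  classical
  simp [mul_apply, embeddingMatrix, hw.eq_iff]

theorem sum_embeddingMatrix_mul_mul_transpose_apply [Fintype κ] (hw : w.Injective)
    {g : κ → κ} {σ : ι → ι} (hg : ∀ a, g (w a) = w (σ a)) :
    ∑ f, (embeddingMatrix R w * N * (embeddingMatrix R w)ᵀ) f (g f) = ∑ a, N a (σ a) :=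
  (Fintype.sum_of_injective w hw _ _
    (fun _ hf => embeddingMatrix_mul_mul_transpose_apply_of_notMem N hf _)
    (fun a => by rw [hg, embeddingMatrix_mul_mul_transpose_apply N hw])).symm

end EmbeddingMatrix

def weightOne (n : ℕ) (k : Fin n) : Fin n → Fin 2 := Pi.single k 1

theorem weightOne_injective (n : ℕ) : (weightOne n).Injective := by
  intro k l hkl
  by_contra hne
  simpa [weightOne, hne] using congrFun hkl k

theorem weightOne_comp_symm {n : ℕ} (π : Equiv.Perm (Fin n)) (k : Fin n) :
    weightOne n k ∘ π.symm = weightOne n (π k) := by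
  ext i
  simp [weightOne, Pi.single_apply, Equiv.symm_apply_eq]

/-- `(t/2)·1 + c₀₁ P₀₁ + c₀₂ P₀₂ + c₁₂ P₁₂`, with `Pᵢⱼ` the permutation matrix of `swap i j`. -/
noncomputable def swapBlock (t c₀₁ c₀₂ c₁₂ : ℝ) : Matrix (Fin 3) (Fin 3) ℝ :=
  !![t / 2 + c₁₂, c₀₁, c₀₂; c₀₁, t / 2 + c₀₂, c₁₂; c₀₂, c₁₂, t / 2 + c₀₁]

section SwapBlock

variable (t c₀₁ c₀₂ c₁₂ : ℝ)

theorem sum_swapBlock_apply_one :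
    ∑ k, swapBlock t c₀₁ c₀₂ c₁₂ k ((1 : Equiv.Perm (Fin 3)) k) = 3 * t / 2 + c₀₁ + c₀₂ + c₁₂ := by
  simp only [swapBlock, Equiv.Perm.coe_one, id_eq, of_apply, cons_val', cons_val_fin_one,
    Fin.sum_univ_three, Fin.isValue, cons_val_zero, cons_val_one, cons_val]
  ring

theorem sum_swapBlock_apply_swap₀₁ :
    ∑ k, swapBlock t c₀₁ c₀₂ c₁₂ k (Equiv.swap 0 1 k) = t / 2 + 3 * c₀₁ := by
  simp only [swapBlock, Fin.isValue, of_apply, cons_val', cons_val_fin_one, Fin.sum_univ_three,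
    Equiv.swap_apply_left, cons_val_one, cons_val_zero, Equiv.swap_apply_right, ne_eq,
    Fin.reduceEq, not_false_eq_true, Equiv.swap_apply_of_ne_of_ne, cons_val]
  ring

theorem sum_swapBlock_apply_swap₀₂ :
    ∑ k, swapBlock t c₀₁ c₀₂ c₁₂ k (Equiv.swap 0 2 k) = t / 2 + 3 * c₀₂ := by
  simp only [swapBlock, Fin.isValue, of_apply, cons_val', cons_val_fin_one, Fin.sum_univ_three,
    Equiv.swap_apply_left, cons_val_one, cons_val_zero, Equiv.swap_apply_right, ne_eq,
    Fin.reduceEq, not_false_eq_true, Equiv.swap_apply_of_ne_of_ne, cons_val]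
  ring

theorem sum_swapBlock_apply_swap₁₂ :
    ∑ k, swapBlock t c₀₁ c₀₂ c₁₂ k (Equiv.swap 1 2 k) = t / 2 + 3 * c₁₂ := by
  simp only [swapBlock, Fin.isValue, of_apply, cons_val', cons_val_fin_one, Fin.sum_univ_three,
    Equiv.swap_apply_left, cons_val_one, cons_val_zero, Equiv.swap_apply_right, ne_eq,
    Fin.reduceEq, not_false_eq_true, Equiv.swap_apply_of_ne_of_ne, cons_val]
  ring

variable {t c₀₁ c₀₂ c₁₂}

theorem posSemidef_swapBlock (ht : 0 ≤ t) (hsum : c₀₁ + c₀₂ + c₁₂ = -(t / 2))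
    (he : 0 ≤ c₀₁ * c₀₂ + c₀₁ * c₁₂ + c₀₂ * c₁₂) : (swapBlock t c₀₁ c₀₂ c₁₂).PosSemidef := by
  rcases ht.eq_or_lt with rfl | ht
  · have hsq : c₀₁ ^ 2 + c₀₂ ^ 2 + c₁₂ ^ 2 ≤ 0 := by
      linear_combination (c₀₁ + c₀₂ + c₁₂) * hsum + 2 * he
    have h₀₁ : c₀₁ = 0 := by nlinarith [sq_nonneg c₀₁, sq_nonneg c₀₂, sq_nonneg c₁₂]
    have h₀₂ : c₀₂ = 0 := by nlinarith [sq_nonneg c₀₁, sq_nonneg c₀₂, sq_nonneg c₁₂]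
    have h₁₂ : c₁₂ = 0 := by nlinarith [sq_nonneg c₀₁, sq_nonneg c₀₂, sq_nonneg c₁₂]
    convert PosSemidef.zero
    ext i j
    fin_cases i <;> fin_cases j <;> simp [swapBlock, h₀₁, h₀₂, h₁₂]
  · set M := swapBlock t c₀₁ c₀₂ c₁₂
    -- `DᵀD = 3·1 - J` is the Laplacian of the triangle
    let D : Matrix (Fin 3) (Fin 3) ℝ := !![1, -1, 0; 0, 1, -1; -1, 0, 1]
    have hid : t • M = Mᴴ * M + (c₀₁ * c₀₂ + c₀₁ * c₁₂ + c₀₂ * c₁₂) • (Dᴴ * D) := by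
      obtain rfl : t = -2 * (c₀₁ + c₀₂ + c₁₂) := by linarith
      ext i j
      fin_cases i <;> fin_cases j <;>
        simp only [M, D, swapBlock, Matrix.smul_apply, Matrix.add_apply, mul_apply,
          conjTranspose_eq_transpose_of_trivial, transpose_apply, Fin.sum_univ_three, of_apply,
          cons_val', cons_val_zero, cons_val_one, cons_val, cons_val_fin_one, smul_eq_mul,
          Fin.isValue, Fin.zero_eta, Fin.mk_one, Fin.reduceFinMk] <;> ring
    have hpos : (t • M).PosSemidef := hid ▸
      (posSemidef_conjTranspose_mul_self M).add ((posSemidef_conjTranspose_mul_self D).smul he)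
    simpa [smul_smul, inv_mul_cancel₀ ht.ne'] using hpos.smul (inv_nonneg.mpr ht.le)

end SwapBlock

noncomputable def lmBlock (x y z : ℝ) : Matrix (Fin 3) (Fin 3) ℝ :=
  swapBlock (1 - (x + y + z) / 3) ((6 * x - 3 - (x + y + z)) / 18)
    ((6 * y - 3 - (x + y + z)) / 18) ((6 * z - 3 - (x + y + z)) / 18)

noncomputable def lmState (x y z : ℝ) : Matrix (Fin 3 → Fin 2) (Fin 3 → Fin 2) ℝ :=
  ((x + y + z) / 3) • single 0 0 1 +
    embeddingMatrix ℝ (weightOne 3) * lmBlock x y z * (embeddingMatrix ℝ (weightOne 3))ᵀ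

theorem lmState_posSemidef {x y z : ℝ} (hLM : 0 ≤ x + y + z ∧ x + y + z ≤ 3)
    (hPT : (x ^ 2 + y ^ 2 + z ^ 2) - 2 * (x * y + x * z + y * z) + 2 * (x + y + z) ≤ 3) :
    (lmState x y z).PosSemidef := by
  have hblock : (lmBlock x y z).PosSemidef :=
    posSemidef_swapBlock (by linarith) (by ring) (by nlinarith)
  have hvac : (single (0 : Fin 3 → Fin 2) 0 (1 : ℝ)).PosSemidef := by
    simpa [diagonal_single] using PosSemidef.diagonal
      (Pi.single_nonneg.mpr zero_le_one : (0 : (Fin 3 → Fin 2) → ℝ) ≤ Pi.single 0 1)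
  refine (hvac.smul (by linarith)).add ?_
  simpa using hblock.mul_mul_conjTranspose_same (embeddingMatrix ℝ (weightOne 3))

theorem sum_lmState_apply_comp_symm (x y z : ℝ) (π : Equiv.Perm (Fin 3)) :
    ∑ f, lmState x y z f (f ∘ π.symm) = (x + y + z) / 3 + ∑ k, lmBlock x y z k (π k) := by
  simp only [lmState, Matrix.add_apply, Matrix.smul_apply, Finset.sum_add_distrib]
  rw [sum_embeddingMatrix_mul_mul_transpose_apply _ (weightOne_injective 3)
    (weightOne_comp_symm π)]
  simp [single_apply, ite_and, Pi.zero_comp]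

theorem lm_pt_sufficient (x y z : ℝ)
    (hLM : 0 ≤ x + y + z ∧ x + y + z ≤ 3)
    (hPT : (x ^ 2 + y ^ 2 + z ^ 2) - 2 * (x * y + x * z + y * z)
      + 2 * (x + y + z) ≤ 3) :
    ∃ ρ : Matrix (Fin 3 → Fin 2) (Fin 3 → Fin 2) ℂ,
      ρ.PosSemidef ∧ ρ.trace = 1 ∧ (∀ i j, (ρ i j).im = 0) ∧ ρᵀ = ρ ∧
      Matrix.trace (ρ * swapOp 3 0 1) = (x : ℂ) ∧
      Matrix.trace (ρ * swapOp 3 0 2) = (y : ℂ) ∧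
      Matrix.trace (ρ * swapOp 3 1 2) = (z : ℂ) := by
  have hρ := lmState_posSemidef hLM hPT
  have hexp (π : Equiv.Perm (Fin 3)) := (trace_map_ofReal_mul_permOp (lmState x y z) π).trans
    (congrArg _ (sum_lmState_apply_comp_symm x y z π))
  refine ⟨(lmState x y z).map (↑), hρ.map_ofReal, ?_, fun _ _ => Complex.ofReal_im _, ?_, ?_, ?_,
    ?_⟩
  · rw [← mul_one (map _ _), ← permOp_one, hexp, lmBlock, sum_swapBlock_apply_one]
    push_cast
    ring
  · rw [← transpose_map, ← conjTranspose_eq_transpose_of_trivial, hρ.isHermitian.eq]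
  · rw [swapOp, hexp, lmBlock, sum_swapBlock_apply_swap₀₁]
    push_cast
    ring
  · rw [swapOp, hexp, lmBlock, sum_swapBlock_apply_swap₀₂]
    push_cast
    ring
  · rw [swapOp, hexp, lmBlock, sum_swapBlock_apply_swap₁₂]
    push_cast
    ring
end

section
/- For any density matrix ρ on (ℂ²)^⊗n, the n×n real symmetric matrix M with entries M_{ij} = tr((X_iX_j + Y_iY_j + Z_iZ_j)ρ) for i ≠ j and M_{ii} = 3 is positive semidefinite. -/
/-!
For each `P ∈ {X, Y, Z}` the matrix `(tr (P_iᴴ P_j ρ))_{ij}` is a Gram matrix for the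
semi-inner product `(A, B) ↦ tr (Aᴴ B ρ)`, so it is positive semidefinite, and so is its
real part.
Since the Pauli matrices are Hermitian involutions, the sum of the three real parts has
off-diagonal entries `Re tr ((X_iX_j + Y_iY_j + Z_iZ_j) ρ)` and diagonal entries `3 tr ρ = 3`.
-/

open Matrix
open scoped ComplexOrder

/-- The single-site operator acting as `A` on qubit `i` of `(ℂ²)^⊗n` and as the
identity elsewhere. -/
noncomputable def siteOp (n : ℕ) (i : Fin n) (A : Matrix (Fin 2) (Fin 2) ℂ) :
    Matrix (Fin n → Fin 2) (Fin n → Fin 2) ℂ :=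
  Matrix.of fun f g => if ∀ k, k ≠ i → f k = g k then A (f i) (g i) else 0

noncomputable def pauliX : Matrix (Fin 2) (Fin 2) ℂ := !![0, 1; 1, 0]
noncomputable def pauliY : Matrix (Fin 2) (Fin 2) ℂ := !![0, -Complex.I; Complex.I, 0]
noncomputable def pauliZ : Matrix (Fin 2) (Fin 2) ℂ := !![1, 0; 0, -1]

namespace Matrix

variable {m ι 𝕜 : Type*} [Fintype m] [Fintype ι] [RCLike 𝕜]

theorem PosSemidef.trace_conjTranspose_mul_mul {ρ : Matrix m m 𝕜} (hρ : ρ.PosSemidef)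
    (A : ι → Matrix m m 𝕜) :
    (of fun i j => ((A i)ᴴ * A j * ρ).trace).PosSemidef := by
  refine .of_dotProduct_mulVec_nonneg ?_ fun x => ?_
  · ext i j
    simp only [conjTranspose_apply, of_apply, ← trace_conjTranspose, conjTranspose_mul,
      conjTranspose_conjTranspose, hρ.isHermitian.eq, mul_assoc]
    rw [trace_mul_comm, mul_assoc]
  · set B := ∑ j, x j • A j
    have hB : star x ⬝ᵥ (of fun i j => ((A i)ᴴ * A j * ρ).trace) *ᵥ x
        = (Bᴴ * B * ρ).trace := by
      simp only [B, conjTranspose_sum, conjTranspose_smul, Finset.sum_mul, Finset.mul_sum,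
        smul_mul_assoc, mul_smul_comm, trace_sum, trace_smul, dotProduct, mulVec, of_apply]
      rw [Finset.sum_comm]
      simp only [smul_eq_mul, Finset.mul_sum, Pi.star_apply]
      exact Finset.sum_congr rfl fun _ _ => Finset.sum_congr rfl fun _ _ => by ring
    rw [hB, mul_assoc, trace_mul_comm]
    exact (hρ.mul_mul_conjTranspose_same B).trace_nonneg

theorem PosSemidef.map_re {G : Matrix ι ι 𝕜} (hG : G.PosSemidef) :
    (G.map RCLike.re).PosSemidef := by
  refine .of_dotProduct_mulVec_nonneg ?_ fun x => ?_
  · ext i j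
    simp [← hG.isHermitian.apply i j]
  · refine (hG.re_dotProduct_nonneg (fun i => (x i : 𝕜))).trans_eq ?_
    simp [dotProduct, mulVec, Finset.mul_sum, map_sum, mul_comm]

end Matrix

open scoped Kronecker

theorem siteOp_eq_reindex_kronecker (n : ℕ) (i : Fin n) (A : Matrix (Fin 2) (Fin 2) ℂ) :
    siteOp n i A = reindex (Equiv.funSplitAt i (Fin 2)).symm (Equiv.funSplitAt i (Fin 2)).symm
      (A ⊗ₖ (1 : Matrix ({k // k ≠ i} → Fin 2) ({k // k ≠ i} → Fin 2) ℂ)) := by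
  ext f g
  simp [siteOp, one_apply, funext_iff]

theorem siteOp_mul_siteOp (n : ℕ) (i : Fin n) (A B : Matrix (Fin 2) (Fin 2) ℂ) :
    siteOp n i A * siteOp n i B = siteOp n i (A * B) := by
  simp only [siteOp_eq_reindex_kronecker, reindex_apply, submatrix_mul_equiv, ← mul_kronecker_mul,
    mul_one]

theorem siteOp_one (n : ℕ) (i : Fin n) : siteOp n i 1 = 1 := by
  rw [siteOp_eq_reindex_kronecker, one_kronecker_one, reindex_apply, submatrix_one_equiv]

theorem conjTranspose_siteOp (n : ℕ) (i : Fin n) (A : Matrix (Fin 2) (Fin 2) ℂ) :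
    (siteOp n i A)ᴴ = siteOp n i Aᴴ := by
  rw [siteOp_eq_reindex_kronecker, siteOp_eq_reindex_kronecker, conjTranspose_reindex,
    conjTranspose_kronecker, conjTranspose_one]

theorem pauliX_isHermitian : pauliX.IsHermitian := by
  ext i j; fin_cases i <;> fin_cases j <;> simp [pauliX]

theorem pauliX_mul_self : pauliX * pauliX = 1 := by
  rw [pauliX, mul_fin_two, one_fin_two]; simp

theorem pauliY_isHermitian : pauliY.IsHermitian := by
  ext i j; fin_cases i <;> fin_cases j <;> simp [pauliY]

theorem pauliY_mul_self : pauliY * pauliY = 1 := by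
  rw [pauliY, mul_fin_two, one_fin_two]; simp

theorem pauliZ_isHermitian : pauliZ.IsHermitian := by
  ext i j; fin_cases i <;> fin_cases j <;> simp [pauliZ]

theorem pauliZ_mul_self : pauliZ * pauliZ = 1 := by
  rw [pauliZ, mul_fin_two, one_fin_two]; simp

theorem pauli_moment_matrix_psd (n : ℕ)
    (ρ : Matrix (Fin n → Fin 2) (Fin n → Fin 2) ℂ)
    (hpsd : ρ.PosSemidef) (htr : ρ.trace = 1)
    (M : Matrix (Fin n) (Fin n) ℝ)
    (hM : ∀ i j : Fin n, M i j = if i = j then 3 else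
      (Matrix.trace ((siteOp n i pauliX * siteOp n j pauliX
        + siteOp n i pauliY * siteOp n j pauliY
        + siteOp n i pauliZ * siteOp n j pauliZ) * ρ)).re) :
    M.PosSemidef := by
  set G : Matrix (Fin 2) (Fin 2) ℂ → Matrix (Fin n) (Fin n) ℂ := fun P =>
    of fun i j => ((siteOp n i P)ᴴ * siteOp n j P * ρ).trace
  have hG_diag {P} (hP : P.IsHermitian) (hPP : P * P = 1) (i : Fin n) : G P i i = 1 := by
    simp only [G, of_apply, conjTranspose_siteOp, hP.eq, siteOp_mul_siteOp, hPP, siteOp_one,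
      one_mul, htr]
  have hM_eq : M = (G pauliX + G pauliY + G pauliZ).map RCLike.re := by
    ext i j
    rw [hM]
    split_ifs with hij
    · subst hij
      rw [map_apply, Matrix.add_apply, Matrix.add_apply, hG_diag pauliX_isHermitian pauliX_mul_self,
        hG_diag pauliY_isHermitian pauliY_mul_self, hG_diag pauliZ_isHermitian pauliZ_mul_self]
      norm_num
    · simp only [map_apply, Matrix.add_apply, G, of_apply, conjTranspose_siteOp,
        pauliX_isHermitian.eq, pauliY_isHermitian.eq, pauliZ_isHermitian.eq, add_mul, trace_add,
        RCLike.re_to_complex]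
  rw [hM_eq]
  exact (((hpsd.trace_conjTranspose_mul_mul _).add (hpsd.trace_conjTranspose_mul_mul _)).add
    (hpsd.trace_conjTranspose_mul_mul _)).map_re
end
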